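/- Let m ≥ 1 be an integer, let b_1, …, b_m be nonnegative real numbers, let 0 < α ≤ 1, and let π̂0 be the EBF estimate computed from b_1, …, b_m. If b_j ≥ m/α for some index j, then (i) π̂0 ≤ 1 − 1/m, and (ii) the plug-in posterior null probability satisfies π̂0/(π̂0 + (1−π̂0)·b_j) ≤ ((m−1)/(m + (m−1)α))·α < α. (This is the paper's Corollary 1: at FDR level α, if a Bayes factor exceeds the automatic rejection threshold m/α, the EBF procedure automatically rejects the corresponding null hypothesis.) -/

import Mathlib

/-- Sum of the `d` smallest values among `b 1, …, b m` (the partial sum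
`∑_{i=1}^{d} b_(i)` of the ascending order statistics). -/
noncomputable def sortedPartialSum {m : ℕ} (b : Fin m → ℝ) (d : ℕ) : ℝ :=
  ∑ i ∈ Finset.univ.filter (fun i : Fin m => (i : ℕ) < d), b (Tuple.sort b i)

/-- The stopping index `d₀` of the EBF procedure: the largest `d ∈ {0,…,m}` with
`∑_{i=1}^{d} b_(i) < d` (equal to `0` if no `d ≥ 1` satisfies this). -/
noncomputable def ebfD0 {m : ℕ} (b : Fin m → ℝ) : ℕ :=
  sSup {d : ℕ | d ≤ m ∧ sortedPartialSum b d < d}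

/-- The EBF estimate `π̂₀ = d₀ / m`. -/
noncomputable def ebfEstimate {m : ℕ} (b : Fin m → ℝ) : ℝ :=
  (ebfD0 b : ℝ) / m

/-! If one Bayes factor is at least `m / α ≥ m`, the full sum `∑ b_(i)` is at least `m`, so
the stopping index `d₀` stays below `m` and `π̂₀ ≤ 1 - 1/m`. The plug-in posterior null
probability `π / (π + (1 - π) B)` is increasing in `π` and decreasing in `B`, so it is at most
its value at `π = 1 - 1/m`, `B = m / α`, which is `(m - 1) α / (m + (m - 1) α) < α`. -/

section EBF

variable {m : ℕ} (b : Fin m → ℝ)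

theorem sortedPartialSum_self : sortedPartialSum b m = ∑ i, b i := by
  rw [sortedPartialSum, Finset.filter_true_of_mem fun i _ => i.isLt]
  exact Equiv.sum_comp (Tuple.sort b) b

variable {b}

theorem ebfEstimate_nonneg : 0 ≤ ebfEstimate b := by
  unfold ebfEstimate
  positivity

theorem ebfD0_lt (hm : 0 < m) (hsum : (m : ℝ) ≤ ∑ i, b i) : ebfD0 b < m := by
  rw [ebfD0]
  rcases Set.eq_empty_or_nonempty {d : ℕ | d ≤ m ∧ sortedPartialSum b d < d} with hS | hS
  · rwa [hS, csSup_empty]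
  · obtain ⟨hle, hlt⟩ := Nat.sSup_mem hS ⟨m, fun d hd => hd.1⟩
    refine lt_of_le_of_ne hle fun heq => ?_
    rw [heq, sortedPartialSum_self] at hlt
    exact hlt.not_ge hsum

theorem ebfEstimate_le_one_sub_inv (hm : 0 < m) (hsum : (m : ℝ) ≤ ∑ i, b i) :
    ebfEstimate b ≤ 1 - 1 / m := by
  have hd0 : (ebfD0 b : ℝ) + 1 ≤ m := by exact_mod_cast ebfD0_lt hm hsum
  have hm' : (0 : ℝ) < m := by exact_mod_cast hm
  rw [ebfEstimate, one_sub_div hm'.ne', div_le_div_iff_of_pos_right hm']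
  linarith

end EBF

section PosteriorNull

noncomputable def posteriorNullProb (π₀ B : ℝ) : ℝ :=
  π₀ / (π₀ + (1 - π₀) * B)

theorem posteriorNullProb_le_posteriorNullProb {p q B B' : ℝ} (hp : 0 ≤ p) (hpq : p ≤ q)
    (hq : q < 1) (hB' : 0 < B') (hBB' : B' ≤ B) :
    posteriorNullProb p B ≤ posteriorNullProb q B' := by
  have hq0 : 0 ≤ q := hp.trans hpq
  have hden : 0 < q + (1 - q) * B' := by nlinarith
  rcases hp.eq_or_lt with rfl | hp0
  · simp only [posteriorNullProb, zero_div]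
    positivity
  have hden' : 0 < p + (1 - p) * B := by nlinarith
  rw [posteriorNullProb, posteriorNullProb, div_le_div_iff₀ hden' hden]
  -- cross-multiplied, this is `p (1 - q) B' ≤ q (1 - p) B`
  have hcoef : p * (1 - q) ≤ q * (1 - p) := by nlinarith
  nlinarith [mul_le_mul hcoef hBB' hB'.le (by nlinarith : 0 ≤ q * (1 - p))]

theorem posteriorNullProb_one_sub_inv_div {m α : ℝ} (hm : m ≠ 0) (hα : α ≠ 0) :
    posteriorNullProb (1 - 1 / m) (m / α) = (m - 1) / (m + (m - 1) * α) * α := by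
  have hden : (1 - 1 / m) + (1 - (1 - 1 / m)) * (m / α) = (m + (m - 1) * α) / (m * α) := by
    field_simp
    ring
  rw [posteriorNullProb, hden, div_div_eq_mul_div, div_mul_eq_mul_div]
  congr 1
  field_simp

end PosteriorNull

/-- **Corollary 1 (Wen, 2013): automatic rejection threshold.** At FDR level `α`, if a
Bayes factor `b j` exceeds `m/α`, then the EBF estimate satisfies `π̂₀ ≤ 1 − 1/m`, and
the plug-in posterior null probability of test `j` satisfies
`π̂₀/(π̂₀ + (1−π̂₀) b_j) ≤ ((m−1)/(m + (m−1)α))·α < α`, so the EBF procedure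
automatically rejects the corresponding null hypothesis. -/
theorem ebf_automatic_rejection
    (m : ℕ) (hm : 1 ≤ m) (b : Fin m → ℝ) (hb : ∀ i, 0 ≤ b i)
    (α : ℝ) (hα0 : 0 < α) (hα1 : α ≤ 1)
    (j : Fin m) (hj : (m : ℝ) / α ≤ b j) :
    ebfEstimate b ≤ 1 - 1 / m ∧
      ebfEstimate b / (ebfEstimate b + (1 - ebfEstimate b) * b j) ≤
        (((m : ℝ) - 1) / (m + ((m : ℝ) - 1) * α)) * α ∧
      (((m : ℝ) - 1) / (m + ((m : ℝ) - 1) * α)) * α < α := by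
  have hm0 : (0 : ℝ) < m := by exact_mod_cast hm
  have hsum : (m : ℝ) ≤ ∑ i, b i :=
    calc (m : ℝ) ≤ m / α := le_div_self hm0.le hα0 hα1
      _ ≤ b j := hj
      _ ≤ ∑ i, b i := Finset.single_le_sum (fun i _ => hb i) (Finset.mem_univ j)
  have hπ := ebfEstimate_le_one_sub_inv hm hsum
  have hm1 : (0 : ℝ) ≤ m - 1 := by
    rw [sub_nonneg]
    exact_mod_cast hm
  have hden : 0 < (m : ℝ) + ((m : ℝ) - 1) * α := by positivity
  refine ⟨hπ, ?_, ?_⟩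
  · rw [← posteriorNullProb_one_sub_inv_div hm0.ne' hα0.ne']
    exact posteriorNullProb_le_posteriorNullProb ebfEstimate_nonneg hπ
      (by simp [hm0]) (by positivity) hj
  · rw [div_mul_eq_mul_div, div_lt_iff₀ hden]
    nlinarith [mul_nonneg hm1 (mul_nonneg hα0.le hα0.le)]
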